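/- Let Σ ⊂ ℝ^{n+1} be a smooth hypersurface whose second fundamental form satisfies |∇A| = |∇|A|| everywhere and whose shape operator has rank at least 2 at a point p. Then ∇A(p) = 0. -/

import Mathlib

/-!
For each `k`, `|∇A| = |∇|A||` is the equality case of Cauchy–Schwarz between `(h_{ijk})_{ij}`
and `(h_{ij})_{ij}`, so `h_{ijk} = C_k h_{ij}`. Full symmetry of `h_{ijk}` then gives
`C_a² h_{ij} = C_i C_j h_{aa}` for every `a`, so `C_a ≠ 0` would make `A` of rank at most one.
Hence `C = 0` and `∇A = 0`.
-/

open Finset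

theorem Finset.exists_eq_mul_of_sq_sum_mul_eq {ι R : Type*} [Field R] [LinearOrder R]
    [IsStrictOrderedRing R] (s : Finset ι) (f g : ι → R) (hg : ∑ i ∈ s, g i ^ 2 ≠ 0)
    (hfg : (∑ i ∈ s, f i * g i) ^ 2 = (∑ i ∈ s, f i ^ 2) * ∑ i ∈ s, g i ^ 2) :
    ∃ c, ∀ i ∈ s, f i = c * g i := by
  set c := (∑ i ∈ s, f i * g i) / ∑ i ∈ s, g i ^ 2
  have hdev : ∑ i ∈ s, (f i - c * g i) ^ 2 = 0 := by
    calc ∑ i ∈ s, (f i - c * g i) ^ 2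
        = ∑ i ∈ s, f i ^ 2 - 2 * c * ∑ i ∈ s, f i * g i + c ^ 2 * ∑ i ∈ s, g i ^ 2 := by
          simp only [sub_sq, sum_add_distrib, sum_sub_distrib, mul_sum]
          congr 1
          · congr 1; exact sum_congr rfl fun i _ => by ring
          · exact sum_congr rfl fun i _ => by ring
      _ = 0 := by
          simp only [c]; field_simp; linear_combination -hfg
  refine ⟨c, fun i hi => ?_⟩
  have := (sum_eq_zero_iff_of_nonneg fun i _ => sq_nonneg (f i - c * g i)).1 hdev i hi
  exact sub_eq_zero.1 (pow_eq_zero_iff two_ne_zero |>.1 this)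

theorem exists_forall_eq_mul_of_sum_sq_mul_eq {ι κ R : Type*} [Fintype ι] [Fintype κ]
    [Field R] [LinearOrder R] [IsStrictOrderedRing R] (u : κ → ι → R) (g : ι → R)
    (hg : ∑ i, g i ^ 2 ≠ 0)
    (hug : (∑ k, ∑ i, u k i ^ 2) * ∑ i, g i ^ 2 = ∑ k, (∑ i, u k i * g i) ^ 2) :
    ∃ c : κ → R, ∀ k i, u k i = c k * g i := by
  have hk : ∀ k, (∑ i, u k i * g i) ^ 2 = (∑ i, u k i ^ 2) * ∑ i, g i ^ 2 := by
    rw [sum_mul] at hug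
    exact fun k => (sum_eq_sum_iff_of_le fun k _ => sum_mul_sq_le_sq_mul_sq _ _ _).1
      hug.symm k (mem_univ k)
  choose c hc using fun k => univ.exists_eq_mul_of_sq_sum_mul_eq (u k) g hg (hk k)
  exact ⟨c, fun k i => hc k i (mem_univ i)⟩

theorem eq_zero_of_symmetric_eq_mul_of_two_le_rank {ι K : Type*} [Fintype ι] [Field K]
    (h : ι → ι → K) (T : ι → ι → ι → K) (C : ι → K)
    (hTsymm : ∀ i j k, T i j k = T i k j ∧ T i j k = T j i k)
    (hT : ∀ i j k, T i j k = C k * h i j) (hrank : 2 ≤ (Matrix.of h).rank) :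
    C = 0 := by
  funext a
  by_contra hCa
  rw [Pi.zero_apply] at hCa
  have hrow : ∀ j, C a * h a j = C j * h a a := fun j => by
    rw [← hT, ← hT, (hTsymm a j a).1]
  have hcol : ∀ i j, C a * h i j = C i * h a j := fun i j => by
    rw [← hT, ← hT, (hTsymm i j a).2, (hTsymm j i a).1, (hTsymm j a i).2]
  have hvec : Matrix.of h = Matrix.vecMulVec (fun i => h a a / C a ^ 2 * C i) C := by
    ext i j
    rw [Matrix.vecMulVec_apply, Matrix.of_apply]
    field_simp
    linear_combination C a * hcol i j + C i * hrow j
  have := hvec ▸ Matrix.rank_vecMulVec_le _ _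
  omega

/-- `h = (h_{ij})` is the second fundamental form at `p` and `T = (h_{ijk})` is `∇A`; since
`|∇|A||² = Σ_k (Σ_{ij} h_{ij}h_{ijk})²/|A|²`, the hypothesis `|∇A| = |∇|A||` is `heq`. -/
theorem stmt_8_general (n : ℕ) (h : Fin n → Fin n → ℝ) (T : Fin n → Fin n → Fin n → ℝ)
    (hTsymm : ∀ i j k, T i j k = T i k j ∧ T i j k = T j i k)
    (hrank : 2 ≤ (Matrix.of h).rank)
    (heq : (∑ k, ∑ i, ∑ j, T i j k ^ 2) * (∑ i, ∑ j, h i j ^ 2)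
      = ∑ k, (∑ i, ∑ j, h i j * T i j k) ^ 2) :
    ∀ i j k, T i j k = 0 := by
  have hA : ∑ p : Fin n × Fin n, h p.1 p.2 ^ 2 ≠ 0 := by
    intro hA
    have hzero : Matrix.of h = 0 := by
      ext i j
      simpa using congrFun ((Fintype.sum_eq_zero_iff_of_nonneg fun _ => sq_nonneg _).1 hA) (i, j)
    simp [hzero] at hrank
  obtain ⟨C, hC⟩ := exists_forall_eq_mul_of_sum_sq_mul_eq
    (fun k (p : Fin n × Fin n) => T p.1 p.2 k) (fun p => h p.1 p.2) hA
    (by simpa only [Fintype.sum_prod_type, mul_comm (T _ _ _)] using heq)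
  have hC0 := eq_zero_of_symmetric_eq_mul_of_two_le_rank h T C hTsymm
    (fun i j k => hC k (i, j)) hrank
  intro i j k
  rw [hC k (i, j), hC0, Pi.zero_apply, zero_mul]

/-- pointwise content of the argument: at a point `p` of a hypersurface
`Σ ⊂ ℝ^{n+1}`, let `h = (h_{ij})` be the (symmetric) second fundamental form and
`T = (h_{ijk})` its covariant derivative `∇A`, fully symmetric by the Codazzi equations.
If `|∇A| = |∇|A||` — which, since `|∇|A||² = Σ_k (Σ_{ij} h_{ij}h_{ijk})²/|A|²`, is the
equality case `(Σ_{ijk} h_{ijk}²)(Σ_{ij} h_{ij}²) = Σ_k (Σ_{ij} h_{ij}h_{ijk})²` of the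
Cauchy–Schwarz inequality — and the shape operator has rank at least 2 at `p`, then
`∇A(p) = 0`. -/
theorem stmt_8 (n : ℕ) (h : Fin n → Fin n → ℝ) (T : Fin n → Fin n → Fin n → ℝ)
    (hsymm : ∀ i j, h i j = h j i)
    (hTsymm : ∀ i j k, T i j k = T i k j ∧ T i j k = T j i k)
    (hrank : 2 ≤ (Matrix.of h).rank)
    (heq : (∑ k, ∑ i, ∑ j, T i j k ^ 2) * (∑ i, ∑ j, h i j ^ 2)
      = ∑ k, (∑ i, ∑ j, h i j * T i j k) ^ 2) :
    ∀ i j k, T i j k = 0 :=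
  stmt_8_general n h T hTsymm hrank heq
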